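/- arXiv:2410.01749 — 3 statements merged into one kernel-verified Lean document; each statement's English description precedes it below -/
import Mathlib

section
/- Let x and x̄ be solutions of the stochastic difference equations x_{k+1} = b(k, x_k) + σ(k, x_k)·w_k, x_0 = η, and x̄_{k+1} = b̄(k, x̄_k) + σ̄(k, x̄_k)·w_k, x̄_0 = η̄, with coefficient sets (b, σ, η) and (b̄, σ̄, η̄) each satisfying the standing measurability, integrability, and uniform L-Lipschitz assumptions. Then E[Σ_{k=0}^N |x_k − x̄_k|²] ≤ C · E[ |η − η̄|² + Σ_{k=0}^{N-1} ( |b(k, x̄_k) − b̄(k, x̄_k)|² + |σ(k, x̄_k) − σ̄(k, x̄_k)|² ) ], where C depends only on N and L. -/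
open MeasureTheory

abbrev Vec (n : ℕ) := EuclideanSpace ℝ (Fin n)

/-! With `Δ_k = x_k - x̄_k`, one step of the two recursions gives `Δ_{k+1} = A + w_k B` where
`A = b(x_k) - b̄(x̄_k)` and `B = σ(x_k) - σ̄(x̄_k)` are `F_{k-1}`-measurable. Pulling `|B|²` out of
`E[|B|² w_k² | F_{k-1}] = |B|²` gives `E|Δ_{k+1}|² ≤ 2 E|A|² + 2 E|B|²`, and splitting
`A = (b(x_k) - b(x̄_k)) + (b - b̄)(x̄_k)` (likewise `B`) with the Lipschitz bound gives
`E|Δ_{k+1}|² ≤ 8L² E|Δ_k|² + 4 D_k` with `D_k = E[|(b - b̄)(x̄_k)|² + |(σ - σ̄)(x̄_k)|²]`.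
A discrete Grönwall argument then bounds `E|Δ_k|²` by `(8L² + 4)^k (|η - η̄|² + Σ_j D_j)`. -/

lemma norm_add_sq_le_two_mul {E : Type*} [SeminormedAddGroup E] (u v : E) :
    ‖u + v‖ ^ 2 ≤ 2 * (‖u‖ ^ 2 + ‖v‖ ^ 2) :=
  (pow_le_pow_left₀ (norm_nonneg _) (norm_add_le u v) 2).trans add_sq_le

lemma norm_smul_sq_eq {E : Type*} [SeminormedAddCommGroup E] [NormedSpace ℝ E] (t : ℝ) (v : E) :
    ‖t • v‖ ^ 2 = ‖v‖ ^ 2 * t ^ 2 := by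
  rw [norm_smul, Real.norm_eq_abs, mul_pow, sq_abs, mul_comm]

lemma norm_sub_sq_le_of_norm_sub_le {E F : Type*} [SeminormedAddCommGroup E]
    [SeminormedAddCommGroup F] {L : ℝ} {g h : E → F}
    (hg : ∀ x x', ‖g x - g x'‖ ≤ L * ‖x - x'‖) (x y : E) :
    ‖g x - h y‖ ^ 2 ≤ 2 * (L ^ 2 * ‖x - y‖ ^ 2 + ‖g y - h y‖ ^ 2) := by
  calc ‖g x - h y‖ ^ 2 = ‖(g x - g y) + (g y - h y)‖ ^ 2 := by rw [sub_add_sub_cancel]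
    _ ≤ 2 * (‖g x - g y‖ ^ 2 + ‖g y - h y‖ ^ 2) := norm_add_sq_le_two_mul _ _
    _ ≤ 2 * ((L * ‖x - y‖) ^ 2 + ‖g y - h y‖ ^ 2) := by
      gcongr
      exact hg x y
    _ = 2 * (L ^ 2 * ‖x - y‖ ^ 2 + ‖g y - h y‖ ^ 2) := by ring

lemma le_pow_mul_of_le_mul_add_mul {e : ℕ → ℝ} {a b M : ℝ} {N : ℕ} (ha : 0 ≤ a) (hb : 0 ≤ b)
    (hab : 1 ≤ a + b) (hM : 0 ≤ M) (h0 : e 0 ≤ M)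
    (hstep : ∀ k < N, e (k + 1) ≤ a * e k + b * M) :
    ∀ k ≤ N, e k ≤ (a + b) ^ k * M := by
  intro k hk
  induction k with
  | zero => simpa using h0
  | succ k ih =>
    have hpow : 1 ≤ (a + b) ^ k := one_le_pow₀ hab
    calc e (k + 1) ≤ a * e k + b * M := hstep k hk
      _ ≤ a * ((a + b) ^ k * M) + b * ((a + b) ^ k * M) := by
        gcongr
        · exact ih (by omega)
        · exact le_mul_of_one_le_left hM hpow
      _ = (a + b) ^ (k + 1) * M := by ring

section Conditional

variable {Ω : Type*} {m m0 : MeasurableSpace Ω} {μ : Measure Ω}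

lemma integrable_of_condExp_ae_eq_one [NeZero μ] {v : Ω → ℝ} (hv : μ[v | m] =ᵐ[μ] 1) :
    Integrable v μ := by
  by_contra hvi
  rw [condExp_of_not_integrable hvi] at hv
  simpa using hv.exists

lemma integral_mul_eq_integral_of_condExp_ae_eq_one [NeZero μ] (hm : m ≤ m0)
    [SigmaFinite (μ.trim hm)] {f v : Ω → ℝ} (hf : StronglyMeasurable[m] f)
    (hfv : Integrable (f * v) μ) (hv : μ[v | m] =ᵐ[μ] 1) :
    ∫ ω, f ω * v ω ∂μ = ∫ ω, f ω ∂μ := by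
  have hpull : μ[f * v | m] =ᵐ[μ] f := by
    filter_upwards [condExp_mul_of_stronglyMeasurable_left hf hfv
      (integrable_of_condExp_ae_eq_one hv), hv] with ω h h1
    simp [h, h1]
  rw [← integral_condExp hm]
  exact integral_congr_ae hpull

lemma integral_norm_add_smul_sq_le {E : Type*} [NormedAddCommGroup E] [NormedSpace ℝ E]
    [NeZero μ] (hm : m ≤ m0) [SigmaFinite (μ.trim hm)] {w : Ω → ℝ}
    (hw : μ[fun ω => w ω ^ 2 | m] =ᵐ[μ] 1) {A B : Ω → E} (hA : MemLp A 2 μ)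
    (hB : StronglyMeasurable[m] B) (hAB : MemLp (fun ω => A ω + w ω • B ω) 2 μ) :
    ∫ ω, ‖A ω + w ω • B ω‖ ^ 2 ∂μ ≤
      2 * (∫ ω, ‖A ω‖ ^ 2 ∂μ + ∫ ω, ‖B ω‖ ^ 2 ∂μ) := by
  have hwB : MemLp (fun ω => w ω • B ω) 2 μ :=
    (hAB.sub hA).ae_eq (ae_of_all _ fun ω => by simp)
  have hBw : Integrable (fun ω => ‖B ω‖ ^ 2 * w ω ^ 2) μ :=
    hwB.norm.integrable_sq.congr (ae_of_all _ fun ω => norm_smul_sq_eq _ _)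
  have hA2 : Integrable (fun ω => ‖A ω‖ ^ 2) μ := hA.norm.integrable_sq
  calc ∫ ω, ‖A ω + w ω • B ω‖ ^ 2 ∂μ
      ≤ ∫ ω, 2 * (‖A ω‖ ^ 2 + ‖B ω‖ ^ 2 * w ω ^ 2) ∂μ := by
        refine integral_mono_of_nonneg (ae_of_all _ fun ω => by positivity)
          ((hA2.add hBw).const_mul 2) (ae_of_all _ fun ω => ?_)
        simpa only [norm_smul_sq_eq] using norm_add_sq_le_two_mul (A ω) (w ω • B ω)
    _ = 2 * (∫ ω, ‖A ω‖ ^ 2 ∂μ + ∫ ω, ‖B ω‖ ^ 2 * w ω ^ 2 ∂μ) := by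
        rw [integral_const_mul, integral_add hA2 hBw]
    _ = 2 * (∫ ω, ‖A ω‖ ^ 2 ∂μ + ∫ ω, ‖B ω‖ ^ 2 ∂μ) := by
        rw [integral_mul_eq_integral_of_condExp_ae_eq_one (f := fun ω => ‖B ω‖ ^ 2) hm
          (hB.norm.pow 2) hBw hw]

end Conditional

lemma measurable_comp_of_continuous {Ω E F : Type*} {mΩ : MeasurableSpace Ω}
    [TopologicalSpace E] [TopologicalSpace.MetrizableSpace E] [SecondCountableTopology E]
    [MeasurableSpace E] [OpensMeasurableSpace E] [TopologicalSpace F]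
    [TopologicalSpace.PseudoMetrizableSpace F] [MeasurableSpace F] [BorelSpace F]
    {g : Ω → E → F} (hg : ∀ x, Measurable fun ω => g ω x)
    (hc : ∀ ω, Continuous (g ω)) {f : Ω → E} (hf : Measurable f) :
    Measurable fun ω => g ω (f ω) :=
  (measurable_uncurry_of_continuous_of_measurable (u := fun x ω => g ω x) hc hg).comp
    (hf.prodMk measurable_id)

lemma integral_norm_sub_sq_le_of_norm_sub_le {Ω E F : Type*} {m0 : MeasurableSpace Ω}
    {μ : Measure Ω} [SeminormedAddCommGroup E] [NormedAddCommGroup F] {L : ℝ}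
    {g h : Ω → E → F} (hg : ∀ ω x x', ‖g ω x - g ω x'‖ ≤ L * ‖x - x'‖) {f f' : Ω → E}
    (hff' : Integrable (fun ω => ‖f ω - f' ω‖ ^ 2) μ)
    (hgh : Integrable (fun ω => ‖g ω (f' ω) - h ω (f' ω)‖ ^ 2) μ) :
    ∫ ω, ‖g ω (f ω) - h ω (f' ω)‖ ^ 2 ∂μ ≤
      2 * (L ^ 2 * ∫ ω, ‖f ω - f' ω‖ ^ 2 ∂μ + ∫ ω, ‖g ω (f' ω) - h ω (f' ω)‖ ^ 2 ∂μ) := by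
  calc ∫ ω, ‖g ω (f ω) - h ω (f' ω)‖ ^ 2 ∂μ
      ≤ ∫ ω, 2 * (L ^ 2 * ‖f ω - f' ω‖ ^ 2 + ‖g ω (f' ω) - h ω (f' ω)‖ ^ 2) ∂μ :=
        integral_mono_of_nonneg (ae_of_all _ fun ω => by positivity)
          (((hff'.const_mul _).add hgh).const_mul 2)
          (ae_of_all _ fun ω => norm_sub_sq_le_of_norm_sub_le (hg ω) _ _)
    _ = _ := by rw [integral_const_mul, integral_add (hff'.const_mul _) hgh, integral_const_mul]

section Coefficients

variable {Ω E F : Type*} {m m0 : MeasurableSpace Ω} [NormedAddCommGroup E] [NormedAddCommGroup F]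
  [MeasurableSpace F]

structure IsAdmissibleCoeff (m : MeasurableSpace Ω) (μ : Measure[m0] Ω) (L : ℝ)
    (g : Ω → E → F) : Prop where
  measurable : ∀ x, Measurable[m] fun ω => g ω x
  memLp_zero : MemLp (fun ω => g ω 0) 2 μ
  norm_sub_le : ∀ ω x x', ‖g ω x - g ω x'‖ ≤ L * ‖x - x'‖

namespace IsAdmissibleCoeff

variable {μ : Measure[m0] Ω} {L : ℝ} {g : Ω → E → F}

theorem continuous (hg : IsAdmissibleCoeff m μ L g) (ω : Ω) : Continuous (g ω) :=
  (LipschitzWith.of_dist_le' fun x x' => by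
    simpa only [dist_eq_norm] using hg.norm_sub_le ω x x').continuous

variable [MeasurableSpace E] [BorelSpace E] [SecondCountableTopology E] [BorelSpace F]

theorem measurable_comp (hg : IsAdmissibleCoeff m μ L g) {f : Ω → E} (hf : Measurable[m] f) :
    Measurable[m] fun ω => g ω (f ω) :=
  measurable_comp_of_continuous hg.measurable hg.continuous hf

theorem memLp_comp [SecondCountableTopology F] (hg : IsAdmissibleCoeff m μ L g) (hm : m ≤ m0)
    {f : Ω → E} (hfm : Measurable[m] f) (hf : MemLp f 2 μ) : MemLp (fun ω => g ω (f ω)) 2 μ := by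
  refine (hg.memLp_zero.norm.add (hf.norm.const_mul L)).of_le
    ((hg.measurable_comp hfm).mono hm le_rfl).aestronglyMeasurable (ae_of_all _ fun ω => ?_)
  calc ‖g ω (f ω)‖ ≤ ‖g ω 0‖ + ‖g ω (f ω) - g ω 0‖ := norm_le_norm_add_norm_sub' _ _
    _ ≤ ‖g ω 0‖ + L * ‖f ω‖ := by simpa using hg.norm_sub_le ω (f ω) 0
    _ ≤ ‖‖g ω 0‖ + L * ‖f ω‖‖ := Real.le_norm_self _

theorem integrable_norm_comp_sub_sq [SecondCountableTopology F] {h : Ω → E → F}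
    (hg : IsAdmissibleCoeff m μ L g) (hh : IsAdmissibleCoeff m μ L h) (hm : m ≤ m0)
    {f : Ω → E} (hfm : Measurable[m] f) (hf : MemLp f 2 μ) :
    Integrable (fun ω => ‖g ω (f ω) - h ω (f ω)‖ ^ 2) μ :=
  ((hg.memLp_comp hm hfm hf).sub (hh.memLp_comp hm hfm hf)).norm.integrable_sq

end IsAdmissibleCoeff

end Coefficients

section Step

variable {Ω E : Type*} {m m0 : MeasurableSpace Ω} {μ : Measure[m0] Ω} [NormedAddCommGroup E]
  [NormedSpace ℝ E] [MeasurableSpace E] [BorelSpace E] [SecondCountableTopology E] {L : ℝ}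

lemma integral_norm_sub_sq_succ_le [NeZero μ] (hm : m ≤ m0) [SigmaFinite (μ.trim hm)]
    {w : Ω → ℝ} (hw : μ[fun ω => w ω ^ 2 | m] =ᵐ[μ] 1) {b σ bb σb : Ω → E → E}
    (hb : IsAdmissibleCoeff m μ L b) (hσ : IsAdmissibleCoeff m μ L σ)
    (hbb : IsAdmissibleCoeff m μ L bb) (hσb : IsAdmissibleCoeff m μ L σb)
    {x xb x' xb' : Ω → E} (hxm : Measurable[m] x) (hx : MemLp x 2 μ)
    (hxbm : Measurable[m] xb) (hxb : MemLp xb 2 μ) (hx' : MemLp x' 2 μ) (hxb' : MemLp xb' 2 μ)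
    (hdyn : ∀ᵐ ω ∂μ, x' ω = b ω (x ω) + w ω • σ ω (x ω))
    (hdynb : ∀ᵐ ω ∂μ, xb' ω = bb ω (xb ω) + w ω • σb ω (xb ω)) :
    ∫ ω, ‖x' ω - xb' ω‖ ^ 2 ∂μ ≤
      8 * L ^ 2 * ∫ ω, ‖x ω - xb ω‖ ^ 2 ∂μ +
        4 * ∫ ω, (‖b ω (xb ω) - bb ω (xb ω)‖ ^ 2 + ‖σ ω (xb ω) - σb ω (xb ω)‖ ^ 2) ∂μ := by
  set A := fun ω => b ω (x ω) - bb ω (xb ω)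
  set B := fun ω => σ ω (x ω) - σb ω (xb ω)
  have hincr : (fun ω => x' ω - xb' ω) =ᵐ[μ] fun ω => A ω + w ω • B ω := by
    filter_upwards [hdyn, hdynb] with ω h h'
    simp only [A, B, h, h', smul_sub]
    abel
  have hA : MemLp A 2 μ := (hb.memLp_comp hm hxm hx).sub (hbb.memLp_comp hm hxbm hxb)
  have hB : StronglyMeasurable[m] B :=
    ((hσ.measurable_comp hxm).sub (hσb.measurable_comp hxbm)).stronglyMeasurable
  have he : Integrable (fun ω => ‖x ω - xb ω‖ ^ 2) μ := (hx.sub hxb).norm.integrable_sq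
  have hdb := hb.integrable_norm_comp_sub_sq hbb hm hxbm hxb
  have hdσ := hσ.integrable_norm_comp_sub_sq hσb hm hxbm hxb
  calc ∫ ω, ‖x' ω - xb' ω‖ ^ 2 ∂μ = ∫ ω, ‖A ω + w ω • B ω‖ ^ 2 ∂μ :=
        integral_congr_ae (hincr.fun_comp fun v => ‖v‖ ^ 2)
    _ ≤ 2 * (∫ ω, ‖A ω‖ ^ 2 ∂μ + ∫ ω, ‖B ω‖ ^ 2 ∂μ) :=
        integral_norm_add_smul_sq_le hm hw hA hB ((hx'.sub hxb').ae_eq hincr)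
    _ ≤ 2 * (2 * (L ^ 2 * ∫ ω, ‖x ω - xb ω‖ ^ 2 ∂μ + ∫ ω, ‖b ω (xb ω) - bb ω (xb ω)‖ ^ 2 ∂μ) +
          2 * (L ^ 2 * ∫ ω, ‖x ω - xb ω‖ ^ 2 ∂μ + ∫ ω, ‖σ ω (xb ω) - σb ω (xb ω)‖ ^ 2 ∂μ)) := by
        gcongr
        · exact integral_norm_sub_sq_le_of_norm_sub_le hb.norm_sub_le he hdb
        · exact integral_norm_sub_sq_le_of_norm_sub_le hσ.norm_sub_le he hdσ
    _ = _ := by rw [integral_add hdb hdσ]; ring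

end Step

theorem stmt4_general (n N : ℕ) (L : ℝ) :
    ∃ C : ℝ, 0 < C ∧
      ∀ (Ω : Type) [m0 : MeasurableSpace Ω] (μ : Measure Ω) [IsProbabilityMeasure μ]
        (G : ℕ → MeasurableSpace Ω), Monotone G → (∀ k, G k ≤ m0) →
      ∀ (w : ℕ → Ω → ℝ),
        (∀ k, Measurable[G (k + 1)] (w k)) →
        (∀ k, μ[w k | G k] =ᵐ[μ] 0) →
        (∀ k, μ[fun ω => w k ω ^ 2 | G k] =ᵐ[μ] 1) →
      ∀ (b σ bb σb : ℕ → Ω → Vec n → Vec n),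
        (∀ k x, Measurable[G k] (fun ω => b k ω x)) →
        (∀ k x, Measurable[G k] (fun ω => σ k ω x)) →
        (∀ k x, Measurable[G k] (fun ω => bb k ω x)) →
        (∀ k x, Measurable[G k] (fun ω => σb k ω x)) →
        (∀ k, MemLp (fun ω => b k ω 0) 2 μ) →
        (∀ k, MemLp (fun ω => σ k ω 0) 2 μ) →
        (∀ k, MemLp (fun ω => bb k ω 0) 2 μ) →
        (∀ k, MemLp (fun ω => σb k ω 0) 2 μ) →
        (∀ k ω x x', ‖b k ω x - b k ω x'‖ ≤ L * ‖x - x'‖) →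
        (∀ k ω x x', ‖σ k ω x - σ k ω x'‖ ≤ L * ‖x - x'‖) →
        (∀ k ω x x', ‖bb k ω x - bb k ω x'‖ ≤ L * ‖x - x'‖) →
        (∀ k ω x x', ‖σb k ω x - σb k ω x'‖ ≤ L * ‖x - x'‖) →
      ∀ (η ηb : Vec n),
      ∀ (x xb : ℕ → Ω → Vec n),
        (∀ k, k ≤ N → Measurable[G k] (x k)) → (∀ k, k ≤ N → MemLp (x k) 2 μ) →
        (x 0 = fun _ => η) →
        (∀ k, k < N → ∀ᵐ ω ∂μ, x (k + 1) ω = b k ω (x k ω) + w k ω • σ k ω (x k ω)) →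
        (∀ k, k ≤ N → Measurable[G k] (xb k)) → (∀ k, k ≤ N → MemLp (xb k) 2 μ) →
        (xb 0 = fun _ => ηb) →
        (∀ k, k < N → ∀ᵐ ω ∂μ, xb (k + 1) ω = bb k ω (xb k ω) + w k ω • σb k ω (xb k ω)) →
        ∑ k ∈ Finset.range (N + 1), ∫ ω, ‖x k ω - xb k ω‖ ^ 2 ∂μ ≤
          C * (‖η - ηb‖ ^ 2 +
            ∑ k ∈ Finset.range N,
              ∫ ω, (‖b k ω (xb k ω) - bb k ω (xb k ω)‖ ^ 2 +
                    ‖σ k ω (xb k ω) - σb k ω (xb k ω)‖ ^ 2) ∂μ) := by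
  refine ⟨∑ k ∈ Finset.range (N + 1), (8 * L ^ 2 + 4) ^ k, by positivity, ?_⟩
  intro Ω m0 μ _ G _ hG w _ _ hw b σ bb σb hbm hσm hbbm hσbm hb0 hσ0 hbb0 hσb0 hb hσ hbb hσb
    η ηb x xb hxm hx hx0 hdyn hxbm hxb hxb0 hdynb
  set e := fun k => ∫ ω, ‖x k ω - xb k ω‖ ^ 2 ∂μ
  set D := fun k => ∫ ω, (‖b k ω (xb k ω) - bb k ω (xb k ω)‖ ^ 2 +
    ‖σ k ω (xb k ω) - σb k ω (xb k ω)‖ ^ 2) ∂μ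
  set M := ‖η - ηb‖ ^ 2 + ∑ k ∈ Finset.range N, D k
  have hD : ∀ k, 0 ≤ D k := fun k => integral_nonneg fun ω => by positivity
  have hM : 0 ≤ M := by positivity
  have hDM : ∀ k < N, D k ≤ M := fun k hk =>
    (Finset.single_le_sum (fun j _ => hD j) (Finset.mem_range.2 hk)).trans
      (le_add_of_nonneg_left (sq_nonneg _))
  have hstep : ∀ k < N, e (k + 1) ≤ 8 * L ^ 2 * e k + 4 * M := fun k hk =>
    (integral_norm_sub_sq_succ_le (hG k) (hw k) ⟨hbm k, hb0 k, hb k⟩ ⟨hσm k, hσ0 k, hσ k⟩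
      ⟨hbbm k, hbb0 k, hbb k⟩ ⟨hσbm k, hσb0 k, hσb k⟩ (hxm k hk.le) (hx k hk.le) (hxbm k hk.le)
      (hxb k hk.le) (hx (k + 1) hk) (hxb (k + 1) hk) (hdyn k hk) (hdynb k hk)).trans
      (by gcongr; exact hDM k hk)
  have h0 : e 0 ≤ M := by
    simp only [e, hx0, hxb0, integral_const, probReal_univ, one_smul]
    exact le_add_of_nonneg_right (Finset.sum_nonneg fun k _ => hD k)
  have hE := le_pow_mul_of_le_mul_add_mul (a := 8 * L ^ 2) (b := 4) (by positivity) zero_le_four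
    (by linarith [sq_nonneg L]) hM h0 hstep
  calc ∑ k ∈ Finset.range (N + 1), e k
      ≤ ∑ k ∈ Finset.range (N + 1), (8 * L ^ 2 + 4) ^ k * M :=
        Finset.sum_le_sum fun k hk => hE k (Nat.lt_succ_iff.1 (Finset.mem_range.1 hk))
    _ = _ := (Finset.sum_mul ..).symm

/-- stability estimate for two SΔEs
`x_{k+1} = b(k,x_k) + σ(k,x_k) w_k, x_0 = η` and
`x̄_{k+1} = b̄(k,x̄_k) + σ̄(k,x̄_k) w_k, x̄_0 = η̄`, both coefficient sets satisfying the
standing measurability, integrability and uniform `L`-Lipschitz assumptions;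
the constant `C` depends only on `N` and `L`.  As before `G k` plays the role of
`F_{k-1}`. -/
theorem stmt4 (n N : ℕ) (L : ℝ) (hL : 0 < L) :
    ∃ C : ℝ, 0 < C ∧
      ∀ (Ω : Type) [m0 : MeasurableSpace Ω] (μ : Measure Ω) [IsProbabilityMeasure μ]
        (G : ℕ → MeasurableSpace Ω), Monotone G → (∀ k, G k ≤ m0) →
      ∀ (w : ℕ → Ω → ℝ),
        (∀ k, Measurable[G (k + 1)] (w k)) →
        (∀ k, μ[w k | G k] =ᵐ[μ] 0) →
        (∀ k, μ[fun ω => w k ω ^ 2 | G k] =ᵐ[μ] 1) →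
      ∀ (b σ bb σb : ℕ → Ω → Vec n → Vec n),
        (∀ k x, Measurable[G k] (fun ω => b k ω x)) →
        (∀ k x, Measurable[G k] (fun ω => σ k ω x)) →
        (∀ k x, Measurable[G k] (fun ω => bb k ω x)) →
        (∀ k x, Measurable[G k] (fun ω => σb k ω x)) →
        (∀ k, MemLp (fun ω => b k ω 0) 2 μ) →
        (∀ k, MemLp (fun ω => σ k ω 0) 2 μ) →
        (∀ k, MemLp (fun ω => bb k ω 0) 2 μ) →
        (∀ k, MemLp (fun ω => σb k ω 0) 2 μ) →
        (∀ k ω x x', ‖b k ω x - b k ω x'‖ ≤ L * ‖x - x'‖) →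
        (∀ k ω x x', ‖σ k ω x - σ k ω x'‖ ≤ L * ‖x - x'‖) →
        (∀ k ω x x', ‖bb k ω x - bb k ω x'‖ ≤ L * ‖x - x'‖) →
        (∀ k ω x x', ‖σb k ω x - σb k ω x'‖ ≤ L * ‖x - x'‖) →
      ∀ (η ηb : Vec n),
      ∀ (x xb : ℕ → Ω → Vec n),
        (∀ k, k ≤ N → Measurable[G k] (x k)) → (∀ k, k ≤ N → MemLp (x k) 2 μ) →
        (x 0 = fun _ => η) →
        (∀ k, k < N → ∀ᵐ ω ∂μ, x (k + 1) ω = b k ω (x k ω) + w k ω • σ k ω (x k ω)) →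
        (∀ k, k ≤ N → Measurable[G k] (xb k)) → (∀ k, k ≤ N → MemLp (xb k) 2 μ) →
        (xb 0 = fun _ => ηb) →
        (∀ k, k < N → ∀ᵐ ω ∂μ, xb (k + 1) ω = bb k ω (xb k ω) + w k ω • σb k ω (xb k ω)) →
        ∑ k ∈ Finset.range (N + 1), ∫ ω, ‖x k ω - xb k ω‖ ^ 2 ∂μ ≤
          C * (‖η - ηb‖ ^ 2 +
            ∑ k ∈ Finset.range N,
              ∫ ω, (‖b k ω (xb k ω) - bb k ω (xb k ω)‖ ^ 2 +
                    ‖σ k ω (xb k ω) - σb k ω (xb k ω)‖ ^ 2) ∂μ) :=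
  stmt4_general n N L
end

section
/- Consider the backward stochastic difference equation y_k = f(k+1, y'_{k+1}, z'_{k+1}) for k = 0,…,N−1 with terminal condition y_N = ξ, where y'_{k+1} = E[y_{k+1} | F_{k-1}] and z'_{k+1} = E[y_{k+1} w_k | F_{k-1}]. Under the assumptions that ξ ∈ L²(F_{N-1}; ℝⁿ), f(k+1, y', z') is F_{k-1}-measurable for each (y', z'), f(·,0,0) is square-integrable, and f is uniformly L-Lipschitz in (y', z'), the BSΔE admits a unique adapted square-integrable solution (y_k)_{k=0}^N, and E[Σ_{k=0}^N |y_k|²] ≤ C ( E|ξ|² + E[Σ_{k=0}^{N-1} |f(k+1, 0, 0)|²] ) with C depending only on N and L. -/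
/-!
The equation expresses `y k` explicitly through `y (k + 1)`, so backward recursion from
`y N = ξ` produces a solution, and any two solutions agree a.e. by backward induction.
Square integrability and the estimate also propagate backwards: the Lipschitz bound gives
`E|y_k|² ≤ 3 E|f(k+1,0,0)|² + 3L² (E|y'_{k+1}|² + E|z'_{k+1}|²)`, and both conditional
expectations are `L²`-contractions; for `z'` this is the conditional Cauchy–Schwarz inequality
`|E[w y | F]|² ≤ E[w² | F] E[|y|² | F]` together with `E[w² | F] = 1`. Iterating,
`E|y_k|² ≤ (3 + 6L²)^(N-k) (E|ξ|² + ∑ E|f(j+1,0,0)|²)`.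
-/

open MeasureTheory

theorem sq_le_mul_of_forall_rat_quadratic_nonneg {a b c : ℝ}
    (h : ∀ q : ℚ, 0 ≤ a * ((q : ℝ) * q) + 2 * b * q + c) : b ^ 2 ≤ a * c := by
  have hreal : ∀ x : ℝ, 0 ≤ a * (x * x) + 2 * b * x + c := fun x =>
    Rat.denseRange_cast.induction_on x (isClosed_le continuous_const (by fun_prop)) h
  have := discrim_le_zero hreal
  rw [discrim] at this
  linarith

section ConditionalCauchySchwarz

variable {Ω : Type*} {m m0 : MeasurableSpace Ω} {μ : Measure Ω}

theorem condExp_mul_sq_le {w Y : Ω → ℝ} (hw : MemLp w 2 μ) (hY : MemLp Y 2 μ) :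
    ∀ᵐ ω ∂μ, μ[fun ω => w ω * Y ω|m] ω ^ 2 ≤
      μ[fun ω => w ω ^ 2|m] ω * μ[fun ω => Y ω ^ 2|m] ω := by
  have hw2 : Integrable (fun ω => w ω ^ 2) μ := hw.integrable_sq
  have hY2 : Integrable (fun ω => Y ω ^ 2) μ := hY.integrable_sq
  have hwY : Integrable (fun ω => w ω * Y ω) μ := hw.integrable_mul hY
  -- `E[(q w + Y)² | m]` is a nonnegative quadratic in `q`, a.e. for all rational `q` at once.
  have hquad : ∀ q : ℚ, ∀ᵐ ω ∂μ, 0 ≤ μ[fun ω => w ω ^ 2|m] ω * ((q : ℝ) * q)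
      + 2 * μ[fun ω => w ω * Y ω|m] ω * q + μ[fun ω => Y ω ^ 2|m] ω := by
    intro q
    have hexpand : (fun ω => ((q : ℝ) * w ω + Y ω) ^ 2) =
        ((q : ℝ) ^ 2 • fun ω => w ω ^ 2) + ((2 * q : ℝ) • fun ω => w ω * Y ω)
          + fun ω => Y ω ^ 2 := by
      funext ω; simp only [Pi.add_apply, Pi.smul_apply, smul_eq_mul]; ring
    have hnonneg : 0 ≤ᵐ[μ] μ[fun ω => ((q : ℝ) * w ω + Y ω) ^ 2|m] :=
      condExp_nonneg (.of_forall fun ω => sq_nonneg _)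
    rw [hexpand] at hnonneg
    filter_upwards [hnonneg,
      condExp_add ((hw2.smul ((q : ℝ) ^ 2)).add (hwY.smul (2 * q : ℝ))) hY2 m,
      condExp_add (hw2.smul ((q : ℝ) ^ 2)) (hwY.smul (2 * q : ℝ)) m,
      condExp_smul ((q : ℝ) ^ 2) (fun ω => w ω ^ 2) m,
      condExp_smul (2 * q : ℝ) (fun ω => w ω * Y ω) m] with ω h h1 h2 h3 h4
    simp only [h1, h2, h3, h4, Pi.add_apply, Pi.smul_apply, smul_eq_mul, Pi.zero_apply] at h
    linarith
  filter_upwards [ae_all_iff.2 hquad] with ω hω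
  simpa [mul_comm] using sq_le_mul_of_forall_rat_quadratic_nonneg hω

theorem norm_condExp_smul_sq_le {ι : Type*} [Fintype ι] {w : Ω → ℝ}
    {y : Ω → EuclideanSpace ℝ ι} (hw : MemLp w 2 μ) (hy : MemLp y 2 μ) :
    ∀ᵐ ω ∂μ, ‖μ[fun ω => w ω • y ω|m] ω‖ ^ 2 ≤
      μ[fun ω => w ω ^ 2|m] ω * μ[fun ω => ‖y ω‖ ^ 2|m] ω := by
  have hcoord : ∀ i, MemLp (fun ω => y ω i) 2 μ := fun i =>
    (EuclideanSpace.proj (𝕜 := ℝ) i).comp_memLp' hy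
  have hwy : Integrable (fun ω => w ω • y ω) μ := memLp_one_iff_integrable.1 (hy.smul hw)
  have hproj : ∀ i, (fun ω => μ[fun ω => w ω • y ω|m] ω i) =ᵐ[μ]
      μ[fun ω => w ω * y ω i|m] := fun i => by
    simpa [Function.comp_def] using (EuclideanSpace.proj (𝕜 := ℝ) i).comp_condExp_comm (m := m) hwy
  have hsum : μ[fun ω => ‖y ω‖ ^ 2|m] =ᵐ[μ] ∑ i, μ[fun ω => y ω i ^ 2|m] := by
    have hfun : (fun ω => ‖y ω‖ ^ 2) = ∑ i, fun ω => y ω i ^ 2 := by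
      funext ω; simp [EuclideanSpace.real_norm_sq_eq]
    rw [hfun]
    exact condExp_finsetSum (fun i _ => (hcoord i).integrable_sq) m
  filter_upwards [ae_all_iff.2 hproj,
    ae_all_iff.2 fun i => condExp_mul_sq_le (m := m) hw (hcoord i), hsum] with ω hproj hcs hsum
  rw [EuclideanSpace.real_norm_sq_eq, hsum, Finset.sum_apply, Finset.mul_sum]
  exact Finset.sum_le_sum fun i _ => hproj i ▸ hcs i

theorem memLp_two_of_condExp_sq_ae_eq_one [NeZero μ] {w : Ω → ℝ}
    (hw : AEStronglyMeasurable w μ) (hw2 : μ[fun ω => w ω ^ 2|m] =ᵐ[μ] 1) : MemLp w 2 μ := by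
  rw [memLp_two_iff_integrable_sq hw]
  -- otherwise `μ[w² | m]` would be the junk value `0`
  by_contra hint
  rw [condExp_of_not_integrable hint] at hw2
  obtain ⟨ω, hω⟩ := hw2.exists
  simp at hω

variable {ι : Type*} [Fintype ι] {w : Ω → ℝ} {y : Ω → EuclideanSpace ℝ ι}

theorem norm_condExp_smul_sq_le_condExp_norm_sq (hw : MemLp w 2 μ)
    (hw2 : μ[fun ω => w ω ^ 2|m] =ᵐ[μ] 1) (hy : MemLp y 2 μ) :
    ∀ᵐ ω ∂μ, ‖μ[fun ω => w ω • y ω|m] ω‖ ^ 2 ≤ μ[fun ω => ‖y ω‖ ^ 2|m] ω := by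
  filter_upwards [norm_condExp_smul_sq_le (m := m) hw hy, hw2] with ω hcs hω
  simpa [hω] using hcs

theorem integrable_norm_condExp_smul_sq (hm : m ≤ m0) (hw : MemLp w 2 μ)
    (hw2 : μ[fun ω => w ω ^ 2|m] =ᵐ[μ] 1) (hy : MemLp y 2 μ) :
    Integrable (fun ω => ‖μ[fun ω => w ω • y ω|m] ω‖ ^ 2) μ := by
  refine (integrable_condExp (m := m) (f := fun ω => ‖y ω‖ ^ 2)).mono'
    ((stronglyMeasurable_condExp.mono hm).norm.pow 2).aestronglyMeasurable ?_
  filter_upwards [norm_condExp_smul_sq_le_condExp_norm_sq hw hw2 hy] with ω h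
  simpa using h

theorem memLp_condExp_smul (hm : m ≤ m0) (hw : MemLp w 2 μ)
    (hw2 : μ[fun ω => w ω ^ 2|m] =ᵐ[μ] 1) (hy : MemLp y 2 μ) :
    MemLp (μ[fun ω => w ω • y ω|m]) 2 μ :=
  (memLp_two_iff_integrable_sq_norm (stronglyMeasurable_condExp.mono hm).aestronglyMeasurable).2
    (integrable_norm_condExp_smul_sq hm hw hw2 hy)

theorem integral_norm_condExp_smul_sq_le [IsFiniteMeasure μ] (hm : m ≤ m0) (hw : MemLp w 2 μ)
    (hw2 : μ[fun ω => w ω ^ 2|m] =ᵐ[μ] 1) (hy : MemLp y 2 μ) :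
    ∫ ω, ‖μ[fun ω => w ω • y ω|m] ω‖ ^ 2 ∂μ ≤ ∫ ω, ‖y ω‖ ^ 2 ∂μ :=
  calc ∫ ω, ‖μ[fun ω => w ω • y ω|m] ω‖ ^ 2 ∂μ ≤ ∫ ω, μ[fun ω => ‖y ω‖ ^ 2|m] ω ∂μ :=
        integral_mono_ae (integrable_norm_condExp_smul_sq hm hw hw2 hy) integrable_condExp
          (norm_condExp_smul_sq_le_condExp_norm_sq hw hw2 hy)
    _ = ∫ ω, ‖y ω‖ ^ 2 ∂μ := integral_condExp hm

theorem integral_norm_condExp_sq_le [IsFiniteMeasure μ] (hm : m ≤ m0) (hy : MemLp y 2 μ) :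
    ∫ ω, ‖μ[y|m] ω‖ ^ 2 ∂μ ≤ ∫ ω, ‖y ω‖ ^ 2 ∂μ := by
  have hone : μ[fun _ => (1 : ℝ) ^ 2|m] =ᵐ[μ] 1 := by
    simp only [one_pow, condExp_const hm]; rfl
  simpa using integral_norm_condExp_smul_sq_le hm (memLp_const 1) hone hy

end ConditionalCauchySchwarz

section LipschitzGenerator

variable {Ω E F : Type*} [NormedAddCommGroup E] [NormedAddCommGroup F] {f : Ω → E → E → F} {L : ℝ}

theorem continuous_uncurry_of_lipschitz
    (hf : ∀ ω a b a' b', ‖f ω a b - f ω a' b'‖ ≤ L * (‖a - a'‖ + ‖b - b'‖)) (ω : Ω) :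
    Continuous fun p : E × E => f ω p.1 p.2 := by
  refine continuous_iff_continuousAt.2 fun p => tendsto_iff_norm_sub_tendsto_zero.2 ?_
  have hbound : Continuous fun q : E × E => L * (‖q.1 - p.1‖ + ‖q.2 - p.2‖) := by fun_prop
  exact squeeze_zero (fun _ => norm_nonneg _) (fun q => hf ω _ _ _ _)
    (by simpa using hbound.tendsto p)

theorem measurable_comp_of_continuous_of_measurable {m : MeasurableSpace Ω}
    [MeasurableSpace E] [BorelSpace E] [SecondCountableTopology E]
    [MeasurableSpace F] [BorelSpace F]
    (hcont : ∀ ω, Continuous fun p : E × E => f ω p.1 p.2)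
    (hmeas : ∀ a b, Measurable fun ω => f ω a b) {g h : Ω → E}
    (hg : Measurable g) (hh : Measurable h) : Measurable fun ω => f ω (g ω) (h ω) := by
  have huncurry := measurable_uncurry_of_continuous_of_measurable
    (u := fun (p : E × E) ω => f ω p.1 p.2) hcont fun p => hmeas p.1 p.2
  exact huncurry.comp ((hg.prodMk hh).prodMk measurable_id)

theorem norm_sq_le_of_lipschitz
    (hf : ∀ ω a b a' b', ‖f ω a b - f ω a' b'‖ ≤ L * (‖a - a'‖ + ‖b - b'‖)) (ω : Ω) (a b : E) :
    ‖f ω a b‖ ^ 2 ≤ 3 * ‖f ω 0 0‖ ^ 2 + 3 * L ^ 2 * ‖a‖ ^ 2 + 3 * L ^ 2 * ‖b‖ ^ 2 := by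
  have hle : ‖f ω a b‖ ≤ ‖f ω 0 0‖ + L * ‖a‖ + L * ‖b‖ := by
    have := hf ω a b 0 0
    simp only [sub_zero] at this
    linarith [norm_sub_norm_le (f ω a b) (f ω 0 0)]
  have hsq : ‖f ω a b‖ ^ 2 ≤ (‖f ω 0 0‖ + L * ‖a‖ + L * ‖b‖) ^ 2 :=
    pow_le_pow_left₀ (norm_nonneg _) hle 2
  nlinarith [sq_nonneg (‖f ω 0 0‖ - L * ‖a‖), sq_nonneg (‖f ω 0 0‖ - L * ‖b‖),
    sq_nonneg (L * ‖a‖ - L * ‖b‖)]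

variable {m0 : MeasurableSpace Ω} {μ : Measure Ω} {g h : Ω → E}

theorem integrable_lipschitz_sq_bound (h0 : MemLp (fun ω => f ω 0 0) 2 μ) (hg : MemLp g 2 μ)
    (hh : MemLp h 2 μ) : Integrable (fun ω =>
      3 * ‖f ω 0 0‖ ^ 2 + 3 * L ^ 2 * ‖g ω‖ ^ 2 + 3 * L ^ 2 * ‖h ω‖ ^ 2) μ :=
  ((((memLp_two_iff_integrable_sq_norm h0.1).1 h0).const_mul 3).add
    (((memLp_two_iff_integrable_sq_norm hg.1).1 hg).const_mul _)).add
    (((memLp_two_iff_integrable_sq_norm hh.1).1 hh).const_mul _)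

theorem memLp_comp_of_lipschitz
    (hf : ∀ ω a b a' b', ‖f ω a b - f ω a' b'‖ ≤ L * (‖a - a'‖ + ‖b - b'‖))
    (hmeas : AEStronglyMeasurable (fun ω => f ω (g ω) (h ω)) μ)
    (h0 : MemLp (fun ω => f ω 0 0) 2 μ) (hg : MemLp g 2 μ) (hh : MemLp h 2 μ) :
    MemLp (fun ω => f ω (g ω) (h ω)) 2 μ :=
  (memLp_two_iff_integrable_sq_norm hmeas).2 <|
    (integrable_lipschitz_sq_bound h0 hg hh).mono' (hmeas.norm.pow 2)
      (.of_forall fun ω => by simpa using norm_sq_le_of_lipschitz hf ω (g ω) (h ω))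

theorem integral_norm_sq_comp_le_of_lipschitz
    (hf : ∀ ω a b a' b', ‖f ω a b - f ω a' b'‖ ≤ L * (‖a - a'‖ + ‖b - b'‖))
    (hmeas : AEStronglyMeasurable (fun ω => f ω (g ω) (h ω)) μ)
    (h0 : MemLp (fun ω => f ω 0 0) 2 μ) (hg : MemLp g 2 μ) (hh : MemLp h 2 μ) :
    ∫ ω, ‖f ω (g ω) (h ω)‖ ^ 2 ∂μ ≤ 3 * ∫ ω, ‖f ω 0 0‖ ^ 2 ∂μ
      + 3 * L ^ 2 * ∫ ω, ‖g ω‖ ^ 2 ∂μ + 3 * L ^ 2 * ∫ ω, ‖h ω‖ ^ 2 ∂μ := by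
  have hcomp := memLp_comp_of_lipschitz hf hmeas h0 hg hh
  refine (integral_mono ((memLp_two_iff_integrable_sq_norm hmeas).1 hcomp)
    (integrable_lipschitz_sq_bound h0 hg hh) fun ω => norm_sq_le_of_lipschitz hf ω _ _).trans_eq ?_
  have i0 := (memLp_two_iff_integrable_sq_norm h0.1).1 h0
  have ig := (memLp_two_iff_integrable_sq_norm hg.1).1 hg
  have ih := (memLp_two_iff_integrable_sq_norm hh.1).1 hh
  rw [integral_add, integral_add, integral_const_mul, integral_const_mul, integral_const_mul]
  exacts [i0.const_mul 3, ig.const_mul _, (i0.const_mul 3).add (ig.const_mul _), ih.const_mul _]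

end LipschitzGenerator

section BackwardEquation

variable {Ω E : Type*} [NormedAddCommGroup E] [NormedSpace ℝ E]
  {m0 : MeasurableSpace Ω} {μ : Measure Ω} {G : ℕ → MeasurableSpace Ω} {w : ℕ → Ω → ℝ}
  {f : ℕ → Ω → E → E → E} {ξ : Ω → E} {N : ℕ}

/-- `G k` stands for the paper's `F_{k-1}` and `f k` for `f(k+1, ·, ·)`; the two conditional
expectations are `y'_{k+1}` and `z'_{k+1}` computed from `Y = y_{k+1}`. -/
noncomputable def bsdeStep (μ : Measure Ω) (G : ℕ → MeasurableSpace Ω) (w : ℕ → Ω → ℝ)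
    (f : ℕ → Ω → E → E → E) (k : ℕ) (Y : Ω → E) : Ω → E :=
  fun ω => f k ω (μ[Y|G k] ω) (μ[fun ω' => w k ω' • Y ω'|G k] ω)

noncomputable def bsdeSolution (μ : Measure Ω) (G : ℕ → MeasurableSpace Ω) (w : ℕ → Ω → ℝ)
    (f : ℕ → Ω → E → E → E) (ξ : Ω → E) (N k : ℕ) : Ω → E :=
  if k < N then bsdeStep μ G w f k (bsdeSolution μ G w f ξ N (k + 1)) else ξ
termination_by N - k

theorem bsdeSolution_of_lt {k : ℕ} (hk : k < N) :
    bsdeSolution μ G w f ξ N k = bsdeStep μ G w f k (bsdeSolution μ G w f ξ N (k + 1)) := by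
  rw [bsdeSolution, if_pos hk]

theorem bsdeSolution_self : bsdeSolution μ G w f ξ N N = ξ := by
  rw [bsdeSolution, if_neg (lt_irrefl N)]

theorem bsdeStep_congr_ae [CompleteSpace E] {k : ℕ} {Y Y' : Ω → E} (h : Y =ᵐ[μ] Y') :
    bsdeStep μ G w f k Y =ᵐ[μ] bsdeStep μ G w f k Y' := by
  filter_upwards [condExp_congr_ae (m := G k) h,
    condExp_congr_ae (m := G k) (h.mono fun ω hω => congrArg (w k ω • ·) hω)] with ω h₁ h₂
  simp only [bsdeStep, h₁, h₂]

theorem bsde_ae_unique [CompleteSpace E] {y y' : ℕ → Ω → E} (hN : y N =ᵐ[μ] y' N)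
    (hy : ∀ k < N, y k =ᵐ[μ] bsdeStep μ G w f k (y (k + 1)))
    (hy' : ∀ k < N, y' k =ᵐ[μ] bsdeStep μ G w f k (y' (k + 1))) :
    ∀ k ≤ N, y k =ᵐ[μ] y' k := fun _ hk =>
  Nat.decreasingInduction
    (fun j hj ih => (hy j hj).trans ((bsdeStep_congr_ae ih).trans (hy' j hj).symm)) hN hk

theorem measurable_bsdeStep [MeasurableSpace E] [BorelSpace E] [SecondCountableTopology E]
    {k : ℕ} (hcont : ∀ ω, Continuous fun p : E × E => f k ω p.1 p.2)
    (hmeas : ∀ a b, Measurable[G k] fun ω => f k ω a b) (Y : Ω → E) :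
    Measurable[G k] (bsdeStep μ G w f k Y) :=
  measurable_comp_of_continuous_of_measurable hcont hmeas stronglyMeasurable_condExp.measurable
    stronglyMeasurable_condExp.measurable

theorem measurable_bsdeSolution [MeasurableSpace E] [BorelSpace E] [SecondCountableTopology E]
    (hcont : ∀ k ω, Continuous fun p : E × E => f k ω p.1 p.2)
    (hmeas : ∀ k a b, Measurable[G k] fun ω => f k ω a b) (hξ : Measurable[G N] ξ) :
    ∀ k ≤ N, Measurable[G k] (bsdeSolution μ G w f ξ N k) := by
  intro k hk
  rcases hk.lt_or_eq with hk | rfl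
  · rw [bsdeSolution_of_lt hk]
    exact measurable_bsdeStep (hcont k) (hmeas k) _
  · rwa [bsdeSolution_self]

end BackwardEquation

section SquareIntegrability

variable {Ω ι : Type*} [Fintype ι] {m0 : MeasurableSpace Ω} {μ : Measure Ω}
  {G : ℕ → MeasurableSpace Ω} {w : ℕ → Ω → ℝ}
  {f : ℕ → Ω → EuclideanSpace ℝ ι → EuclideanSpace ℝ ι → EuclideanSpace ℝ ι} {L : ℝ} {k : ℕ}
  {Y : Ω → EuclideanSpace ℝ ι}

theorem memLp_bsdeStep (hG : G k ≤ m0) (hw : MemLp (w k) 2 μ)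
    (hw2 : μ[fun ω => w k ω ^ 2|G k] =ᵐ[μ] 1) (hmeas : ∀ a b, Measurable[G k] fun ω => f k ω a b)
    (h0 : MemLp (fun ω => f k ω 0 0) 2 μ)
    (hf : ∀ ω a b a' b', ‖f k ω a b - f k ω a' b'‖ ≤ L * (‖a - a'‖ + ‖b - b'‖))
    (hY : MemLp Y 2 μ) : MemLp (bsdeStep μ G w f k Y) 2 μ :=
  memLp_comp_of_lipschitz hf
    ((measurable_bsdeStep (continuous_uncurry_of_lipschitz hf) hmeas Y).mono hG
      le_rfl).aestronglyMeasurable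
    h0 (hY.condExp one_le_two) (memLp_condExp_smul hG hw hw2 hY)

theorem integral_norm_bsdeStep_sq_le [IsFiniteMeasure μ] (hG : G k ≤ m0) (hw : MemLp (w k) 2 μ)
    (hw2 : μ[fun ω => w k ω ^ 2|G k] =ᵐ[μ] 1) (hmeas : ∀ a b, Measurable[G k] fun ω => f k ω a b)
    (h0 : MemLp (fun ω => f k ω 0 0) 2 μ)
    (hf : ∀ ω a b a' b', ‖f k ω a b - f k ω a' b'‖ ≤ L * (‖a - a'‖ + ‖b - b'‖))
    (hY : MemLp Y 2 μ) :
    ∫ ω, ‖bsdeStep μ G w f k Y ω‖ ^ 2 ∂μ ≤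
      3 * ∫ ω, ‖f k ω 0 0‖ ^ 2 ∂μ + 6 * L ^ 2 * ∫ ω, ‖Y ω‖ ^ 2 ∂μ := by
  have hstep := integral_norm_sq_comp_le_of_lipschitz hf
    (memLp_bsdeStep hG hw hw2 hmeas h0 hf hY).1 h0 (hY.condExp one_le_two)
    (memLp_condExp_smul hG hw hw2 hY)
  have hy' := integral_norm_condExp_sq_le hG hY
  have hz' := integral_norm_condExp_smul_sq_le hG hw hw2 hY
  have hL : 0 ≤ L ^ 2 := sq_nonneg L
  simp only [bsdeStep]
  nlinarith

theorem memLp_bsdeSolution_and_integral_le [IsFiniteMeasure μ] {ξ : Ω → EuclideanSpace ℝ ι}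
    {N : ℕ} (hG : ∀ k, G k ≤ m0) (hw : ∀ k, MemLp (w k) 2 μ)
    (hw2 : ∀ k, μ[fun ω => w k ω ^ 2|G k] =ᵐ[μ] 1)
    (hmeas : ∀ k a b, Measurable[G k] fun ω => f k ω a b)
    (h0 : ∀ k, MemLp (fun ω => f k ω 0 0) 2 μ)
    (hf : ∀ k ω a b a' b', ‖f k ω a b - f k ω a' b'‖ ≤ L * (‖a - a'‖ + ‖b - b'‖))
    (hξ : MemLp ξ 2 μ) :
    ∀ k ≤ N, MemLp (bsdeSolution μ G w f ξ N k) 2 μ ∧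
      ∫ ω, ‖bsdeSolution μ G w f ξ N k ω‖ ^ 2 ∂μ ≤ (3 + 6 * L ^ 2) ^ (N - k) *
        (∫ ω, ‖ξ ω‖ ^ 2 ∂μ + ∑ j ∈ Finset.range N, ∫ ω, ‖f j ω 0 0‖ ^ 2 ∂μ) := by
  set S := ∫ ω, ‖ξ ω‖ ^ 2 ∂μ + ∑ j ∈ Finset.range N, ∫ ω, ‖f j ω 0 0‖ ^ 2 ∂μ
  have hsq : ∀ g : Ω → EuclideanSpace ℝ ι, 0 ≤ ∫ ω, ‖g ω‖ ^ 2 ∂μ := fun g =>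
    integral_nonneg fun ω => sq_nonneg _
  have hξS : ∫ ω, ‖ξ ω‖ ^ 2 ∂μ ≤ S :=
    le_add_of_nonneg_right (Finset.sum_nonneg fun j _ => hsq fun ω => f j ω 0 0)
  have hfS : ∀ j < N, ∫ ω, ‖f j ω 0 0‖ ^ 2 ∂μ ≤ S := fun j hj =>
    (Finset.single_le_sum (fun j _ => hsq fun ω => f j ω 0 0) (Finset.mem_range.2 hj)).trans
      (le_add_of_nonneg_left (hsq ξ))
  intro k hk
  induction hk using Nat.decreasingInduction with
  | self => rw [bsdeSolution_self, Nat.sub_self, pow_zero, one_mul]; exact ⟨hξ, hξS⟩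
  | of_succ j hj ih =>
    obtain ⟨hM, hI⟩ := ih
    rw [bsdeSolution_of_lt hj]
    refine ⟨memLp_bsdeStep (hG j) (hw j) (hw2 j) (hmeas j) (h0 j) (hf j) hM, ?_⟩
    have hpow : (3 + 6 * L ^ 2) ^ (N - j) = (3 + 6 * L ^ 2) * (3 + 6 * L ^ 2) ^ (N - (j + 1)) := by
      rw [← pow_succ']; congr 1; omega
    have hone : 1 ≤ (3 + 6 * L ^ 2) ^ (N - (j + 1)) := one_le_pow₀ (by nlinarith)
    calc _ ≤ 3 * ∫ ω, ‖f j ω 0 0‖ ^ 2 ∂μ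
          + 6 * L ^ 2 * ∫ ω, ‖bsdeSolution μ G w f ξ N (j + 1) ω‖ ^ 2 ∂μ :=
          integral_norm_bsdeStep_sq_le (hG j) (hw j) (hw2 j) (hmeas j) (h0 j) (hf j) hM
      _ ≤ _ := by
          rw [hpow]
          nlinarith [hfS j hj, mul_le_mul_of_nonneg_left hI (by positivity : 0 ≤ 6 * L ^ 2),
            mul_le_mul_of_nonneg_right hone (le_trans (hsq ξ) hξS)]

end SquareIntegrability

theorem sum_range_le_of_le_pow_sub {N : ℕ} {a : ℕ → ℝ} {B S : ℝ} (hB : 1 ≤ B) (hS : 0 ≤ S)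
    (ha : ∀ k ≤ N, a k ≤ B ^ (N - k) * S) : ∑ k ∈ Finset.range (N + 1), a k ≤ (N + 1) * B ^ N * S :=
  calc ∑ k ∈ Finset.range (N + 1), a k ≤ ∑ k ∈ Finset.range (N + 1), B ^ N * S :=
        Finset.sum_le_sum fun k hk => (ha k (Nat.lt_succ_iff.1 (Finset.mem_range.1 hk))).trans
          (mul_le_mul_of_nonneg_right (pow_le_pow_right₀ hB (Nat.sub_le N k)) hS)
    _ = (N + 1) * B ^ N * S := by simp [mul_assoc]

theorem stmt5_general (n N : ℕ) (L : ℝ) :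
    ∃ C : ℝ, 0 < C ∧
      ∀ (Ω : Type) [m0 : MeasurableSpace Ω] (μ : Measure Ω) [IsProbabilityMeasure μ]
        (G : ℕ → MeasurableSpace Ω), Monotone G → (∀ k, G k ≤ m0) →
      ∀ (w : ℕ → Ω → ℝ),
        (∀ k, Measurable[G (k + 1)] (w k)) →
        (∀ k, μ[w k | G k] =ᵐ[μ] 0) →
        (∀ k, μ[fun ω => w k ω ^ 2 | G k] =ᵐ[μ] 1) →
      ∀ (f : ℕ → Ω → Vec n → Vec n → Vec n),
        (∀ k y' z', Measurable[G k] (fun ω => f k ω y' z')) →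
        (∀ k, MemLp (fun ω => f k ω 0 0) 2 μ) →
        (∀ k ω y' z' yb' zb',
          ‖f k ω y' z' - f k ω yb' zb'‖ ≤ L * (‖y' - yb'‖ + ‖z' - zb'‖)) →
      ∀ (ξ : Ω → Vec n), Measurable[G N] ξ → MemLp ξ 2 μ →
      ∃ y : ℕ → Ω → Vec n,
        (∀ k, k ≤ N → Measurable[G k] (y k)) ∧
        (∀ k, k ≤ N → MemLp (y k) 2 μ) ∧
        y N =ᵐ[μ] ξ ∧
        (∀ k, k < N → y k =ᵐ[μ] fun ω =>
          f k ω ((μ[y (k + 1) | G k]) ω)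
            ((μ[fun ω' => w k ω' • y (k + 1) ω' | G k]) ω)) ∧
        (∀ y' : ℕ → Ω → Vec n,
          (∀ k, k ≤ N → Measurable[G k] (y' k)) → (∀ k, k ≤ N → MemLp (y' k) 2 μ) →
          y' N =ᵐ[μ] ξ →
          (∀ k, k < N → y' k =ᵐ[μ] fun ω =>
            f k ω ((μ[y' (k + 1) | G k]) ω)
              ((μ[fun ω' => w k ω' • y' (k + 1) ω' | G k]) ω)) →
          ∀ k, k ≤ N → y' k =ᵐ[μ] y k) ∧
        ∑ k ∈ Finset.range (N + 1), ∫ ω, ‖y k ω‖ ^ 2 ∂μ ≤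
          C * (∫ ω, ‖ξ ω‖ ^ 2 ∂μ +
            ∑ k ∈ Finset.range N, ∫ ω, ‖f k ω 0 0‖ ^ 2 ∂μ) := by
  refine ⟨(N + 1) * (3 + 6 * L ^ 2) ^ N, by positivity, ?_⟩
  intro Ω m0 μ _ G _ hG w hw _ hw2 f hfm hf0 hf ξ hξm hξ
  have hwL2 : ∀ k, MemLp (w k) 2 μ := fun k =>
    memLp_two_of_condExp_sq_ae_eq_one ((hw k).mono (hG (k + 1)) le_rfl).aestronglyMeasurable (hw2 k)
  have hest := memLp_bsdeSolution_and_integral_le (N := N) hG hwL2 hw2 hfm hf0 hf hξ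
  have hξN : bsdeSolution μ G w f ξ N N =ᵐ[μ] ξ := by rw [bsdeSolution_self]
  refine ⟨bsdeSolution μ G w f ξ N,
    measurable_bsdeSolution (fun k => continuous_uncurry_of_lipschitz (hf k)) hfm hξm,
    fun k hk => (hest k hk).1, hξN, fun k hk => .of_eq (bsdeSolution_of_lt hk),
    fun y' _ _ hy'N hy'rec => bsde_ae_unique (hy'N.trans hξN.symm) hy'rec
      fun k hk => .of_eq (bsdeSolution_of_lt hk), ?_⟩
  exact sum_range_le_of_le_pow_sub (by nlinarith) (by positivity) fun k hk => (hest k hk).2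

/-- existence, uniqueness (up to a.e. equality) and a priori estimate for the
backward stochastic difference equation `y_k = f(k+1, y'_{k+1}, z'_{k+1})`, `y_N = ξ`,
where `y'_{k+1} = E[y_{k+1} | F_{k-1}]` and `z'_{k+1} = E[y_{k+1} w_k | F_{k-1}]`.
Here `G k` plays the role of `F_{k-1}` and `f k` that of `f(k+1, ·, ·)`.
The constant `C` depends only on `N` and the Lipschitz constant `L`. -/
theorem stmt5 (n N : ℕ) (L : ℝ) (hL : 0 < L) :
    ∃ C : ℝ, 0 < C ∧
      ∀ (Ω : Type) [m0 : MeasurableSpace Ω] (μ : Measure Ω) [IsProbabilityMeasure μ]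
        (G : ℕ → MeasurableSpace Ω), Monotone G → (∀ k, G k ≤ m0) →
      ∀ (w : ℕ → Ω → ℝ),
        (∀ k, Measurable[G (k + 1)] (w k)) →
        (∀ k, μ[w k | G k] =ᵐ[μ] 0) →
        (∀ k, μ[fun ω => w k ω ^ 2 | G k] =ᵐ[μ] 1) →
      ∀ (f : ℕ → Ω → Vec n → Vec n → Vec n),
        (∀ k y' z', Measurable[G k] (fun ω => f k ω y' z')) →
        (∀ k, MemLp (fun ω => f k ω 0 0) 2 μ) →
        (∀ k ω y' z' yb' zb',
          ‖f k ω y' z' - f k ω yb' zb'‖ ≤ L * (‖y' - yb'‖ + ‖z' - zb'‖)) →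
      ∀ (ξ : Ω → Vec n), Measurable[G N] ξ → MemLp ξ 2 μ →
      ∃ y : ℕ → Ω → Vec n,
        (∀ k, k ≤ N → Measurable[G k] (y k)) ∧
        (∀ k, k ≤ N → MemLp (y k) 2 μ) ∧
        y N =ᵐ[μ] ξ ∧
        (∀ k, k < N → y k =ᵐ[μ] fun ω =>
          f k ω ((μ[y (k + 1) | G k]) ω)
            ((μ[fun ω' => w k ω' • y (k + 1) ω' | G k]) ω)) ∧
        (∀ y' : ℕ → Ω → Vec n,
          (∀ k, k ≤ N → Measurable[G k] (y' k)) → (∀ k, k ≤ N → MemLp (y' k) 2 μ) →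
          y' N =ᵐ[μ] ξ →
          (∀ k, k < N → y' k =ᵐ[μ] fun ω =>
            f k ω ((μ[y' (k + 1) | G k]) ω)
              ((μ[fun ω' => w k ω' • y' (k + 1) ω' | G k]) ω)) →
          ∀ k, k ≤ N → y' k =ᵐ[μ] y k) ∧
        ∑ k ∈ Finset.range (N + 1), ∫ ω, ‖y k ω‖ ^ 2 ∂μ ≤
          C * (∫ ω, ‖ξ ω‖ ^ 2 ∂μ +
            ∑ k ∈ Finset.range N, ∫ ω, ‖f k ω 0 0‖ ^ 2 ∂μ) :=
  stmt5_general n N L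
end

section
/- Key duality computation in the forward LQ verification: with (x̄, ȳ, ū) solving the Hamiltonian system and (x, u) any admissible state-control pair with the same forward dynamics, E[⟨M ξ̄, ξ−ξ̄⟩ + ⟨G x̄_N, x_N−x̄_N⟩] = E[ Σ_{k=0}^{N-1}( ⟨B_k^T ȳ'_{k+1} + D_k^T z̄'_{k+1}, u_k−ū_k⟩ − ⟨Q_k x̄_k, x_k−x̄_k⟩ ) ]. -/
/-!
Write `d k = x k - x̄ k` and `v k = u k - ū k`. The inhomogeneous terms `b`, `σ` cancel, so
`d (k+1) = A d + B v + w k • (C d + D v)` with `G k`-measurable coefficients. Conditioning on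
`G k` and pulling these out turns `E ⟨d (k+1), ȳ (k+1)⟩` into
`E [⟨A d + B v, ȳ'⟩ + ⟨C d + D v, z̄'⟩]`, and the adjoint equation rewrites this as
`E ⟨d k, ȳ k⟩ + E [⟨Bᵀ ȳ' + Dᵀ z̄', v k⟩ - ⟨Q x̄, d k⟩]`. Summing over `k` telescopes; the
boundary terms are `⟨d N, Gm x̄ N⟩` and `-⟨d 0, ȳ 0⟩ = ⟨d 0, M x̄ 0⟩`.
-/

open MeasureTheory Matrix
noncomputable section

def ev {m : ℕ} (x : Fin m → ℝ) : Vec m := WithLp.toLp 2 x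

theorem measurable_ev_mulVec {Ω : Type*} {m : MeasurableSpace Ω} {n p : ℕ}
    {A : Ω → Matrix (Fin n) (Fin p) ℝ} {φ : Ω → Vec p}
    (hA : ∀ i j, Measurable[m] fun ω => A ω i j) (hφ : Measurable[m] φ) :
    Measurable[m] fun ω => ev (A ω *ᵥ φ ω) := by
  have hφj : ∀ j, Measurable[m] fun ω => φ ω j := fun j =>
    (measurable_pi_apply j).comp ((WithLp.measurable_ofLp 2 _).comp hφ)
  refine (WithLp.measurable_toLp 2 _).comp (measurable_pi_lambda _ fun i => ?_)
  exact Finset.measurable_sum Finset.univ fun j _ => (hA i j).mul (hφj j)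

section

variable {Ω : Type*} {m : MeasurableSpace Ω} [MeasurableSpace Ω] {μ : Measure Ω} {n p : ℕ}

theorem condExp_dotProduct_of_stronglyMeasurable_left {f y : Ω → Vec n}
    (hf : StronglyMeasurable[m] f) (hfy : Integrable (fun ω => f ω ⬝ᵥ y ω) μ)
    (hy : Integrable y μ) :
    μ[fun ω => f ω ⬝ᵥ y ω | m] =ᵐ[μ] fun ω => f ω ⬝ᵥ μ[y | m] ω := by
  have key : ∀ a b : Vec n, innerSL ℝ a b = a ⬝ᵥ b := fun a b => by
    simp [EuclideanSpace.inner_eq_star_dotProduct, dotProduct_comm]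
  simpa only [key] using
    condExp_bilin_of_stronglyMeasurable_left (innerSL ℝ) hf (by simpa only [key] using hfy) hy

theorem integrable_dotProduct {f y : Ω → Vec n} (hf : MemLp f 2 μ) (hy : MemLp y 2 μ) :
    Integrable (fun ω => f ω ⬝ᵥ y ω) μ :=
  integrable_finsetSum _ fun i _ => (hf.eval_piLp i).integrable_mul (hy.eval_piLp i)

theorem MeasureTheory.MemLp.ev_mulVec {q : ENNReal} {A : Ω → Matrix (Fin n) (Fin p) ℝ}
    {φ : Ω → Vec p} (hA : ∀ i j, AEStronglyMeasurable (fun ω => A ω i j) μ)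
    (hAbd : ∃ c, ∀ ω i j, |A ω i j| ≤ c) (hφ : MemLp φ q μ) :
    MemLp (fun ω => ev (A ω *ᵥ φ ω)) q μ := by
  obtain ⟨c, hc⟩ := hAbd
  refine MemLp.of_eval_piLp fun i => ?_
  show MemLp (fun ω => ∑ j, A ω i j * φ ω j) q μ
  exact memLp_finsetSum _ fun j _ =>
    (hφ.eval_piLp j).mul' (r := q) (memLp_top_of_bound (hA i j) c (ae_of_all _ fun ω => hc ω i j))

theorem memLp_two_of_condExp_sq_eq_one [NeZero μ] {w : Ω → ℝ} (hw : AEStronglyMeasurable w μ)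
    (h1 : μ[fun ω => w ω ^ 2 | m] =ᵐ[μ] 1) : MemLp w 2 μ := by
  rw [memLp_two_iff_integrable_sq hw]
  by_contra hint
  rw [condExp_of_not_integrable hint] at h1
  simpa using h1.exists

theorem condExp_dotProduct_of_ae_eq_add_smul {f g d y : Ω → Vec n} {w : Ω → ℝ}
    (hf : StronglyMeasurable[m] f) (hg : StronglyMeasurable[m] g)
    (hd : d =ᵐ[μ] fun ω => f ω + w ω • g ω) (hdy : Integrable (fun ω => d ω ⬝ᵥ y ω) μ)
    (hfy : Integrable (fun ω => f ω ⬝ᵥ y ω) μ) (hy : Integrable y μ)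
    (hwy : Integrable (fun ω => w ω • y ω) μ) :
    μ[fun ω => d ω ⬝ᵥ y ω | m] =ᵐ[μ]
      fun ω => f ω ⬝ᵥ μ[y | m] ω + g ω ⬝ᵥ μ[fun ω => w ω • y ω | m] ω := by
  have hsplit : (fun ω => d ω ⬝ᵥ y ω) =ᵐ[μ] fun ω => f ω ⬝ᵥ y ω + g ω ⬝ᵥ (w ω • y ω) := by
    filter_upwards [hd] with ω h
    simp only [h, WithLp.ofLp_add, WithLp.ofLp_smul, add_dotProduct, smul_dotProduct,
      dotProduct_smul]
  have hgwy : Integrable (fun ω => g ω ⬝ᵥ (w ω • y ω)) μ :=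
    (hdy.sub hfy).congr (by filter_upwards [hsplit] with ω h; simp [h])
  calc μ[fun ω => d ω ⬝ᵥ y ω | m]
      =ᵐ[μ] μ[fun ω => f ω ⬝ᵥ y ω + g ω ⬝ᵥ (w ω • y ω) | m] := condExp_congr_ae hsplit
    _ =ᵐ[μ] μ[fun ω => f ω ⬝ᵥ y ω | m] + μ[fun ω => g ω ⬝ᵥ (w ω • y ω) | m] :=
      condExp_add hfy hgwy m
    _ =ᵐ[μ] _ := (condExp_dotProduct_of_stronglyMeasurable_left hf hfy hy).add
      (condExp_dotProduct_of_stronglyMeasurable_left hg hgwy hwy)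

end

theorem dotProduct_mulVec_add_eq_of_adjoint {n p : ℕ} (A C : Matrix (Fin n) (Fin n) ℝ)
    (B D : Matrix (Fin n) (Fin p) ℝ) (d y y' z' q : Fin n → ℝ) (v : Fin p → ℝ)
    (hy : y = Aᵀ *ᵥ y' + Cᵀ *ᵥ z' + q) :
    (A *ᵥ d + B *ᵥ v) ⬝ᵥ y' + (C *ᵥ d + D *ᵥ v) ⬝ᵥ z' =
      d ⬝ᵥ y + ((Bᵀ *ᵥ y' + Dᵀ *ᵥ z') ⬝ᵥ v - q ⬝ᵥ d) := by
  subst hy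
  rw [dotProduct_comm (A *ᵥ d + B *ᵥ v), dotProduct_comm (C *ᵥ d + D *ᵥ v),
    dotProduct_comm (Bᵀ *ᵥ y' + Dᵀ *ᵥ z') v, dotProduct_comm q]
  simp only [dotProduct_add, dotProduct_transpose_mulVec]
  ring

theorem forward_step_sub {n p : ℕ} (A C : Matrix (Fin n) (Fin n) ℝ)
    (B D : Matrix (Fin n) (Fin p) ℝ) (x x' b σ : Vec n) (u u' : Vec p) (w : ℝ) :
    ev (A *ᵥ x) + ev (B *ᵥ u) + b + w • (ev (C *ᵥ x) + ev (D *ᵥ u) + σ)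
      - (ev (A *ᵥ x') + ev (B *ᵥ u') + b + w • (ev (C *ᵥ x') + ev (D *ᵥ u') + σ)) =
      ev (A *ᵥ (x - x')) + ev (B *ᵥ (u - u')) + w • (ev (C *ᵥ (x - x')) + ev (D *ᵥ (u - u'))) := by
  simp only [ev, mulVec_sub, WithLp.toLp_sub]
  module

theorem dotProduct_boundary {n : ℕ} {M : Matrix (Fin n) (Fin n) ℝ} (hM : IsUnit M)
    (G : Matrix (Fin n) (Fin n) ℝ) {x₀ xb₀ y₀ x xb y : Vec n}
    (h₀ : xb₀ = -ev (M⁻¹ *ᵥ y₀)) (h : y = ev (G *ᵥ xb)) :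
    M *ᵥ xb₀ ⬝ᵥ (x₀ - xb₀) + G *ᵥ xb ⬝ᵥ (x - xb) =
      (x - xb : Vec n) ⬝ᵥ y - (x₀ - xb₀ : Vec n) ⬝ᵥ y₀ := by
  have hM₀ : M *ᵥ xb₀ = -y₀ := by
    rw [h₀]
    change M *ᵥ -(M⁻¹ *ᵥ y₀) = -y₀
    rw [mulVec_neg, mulVec_mulVec, mul_nonsing_inv _ ((isUnit_iff_isUnit_det M).mp hM),
      one_mulVec]
  have hG : G *ᵥ xb = y := by rw [h]; rfl
  rw [hM₀, hG, neg_dotProduct, dotProduct_comm y, dotProduct_comm y₀, WithLp.ofLp_sub,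
    WithLp.ofLp_sub]
  ring

theorem integral_dotProduct_adjoint_step {Ω : Type*} {m : MeasurableSpace Ω}
    [m0 : MeasurableSpace Ω] {μ : Measure Ω} [IsFiniteMeasure μ] (hm : m ≤ m0) {n p : ℕ}
    {A C : Ω → Matrix (Fin n) (Fin n) ℝ} {B D : Ω → Matrix (Fin n) (Fin p) ℝ}
    (hA : ∀ i j, Measurable[m] fun ω => A ω i j) (hB : ∀ i j, Measurable[m] fun ω => B ω i j)
    (hC : ∀ i j, Measurable[m] fun ω => C ω i j) (hD : ∀ i j, Measurable[m] fun ω => D ω i j)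
    (hAbd : ∃ c, ∀ ω i j, |A ω i j| ≤ c) (hBbd : ∃ c, ∀ ω i j, |B ω i j| ≤ c)
    {d d' y y' : Ω → Vec n} {v : Ω → Vec p} {w : Ω → ℝ} {q : Ω → Fin n → ℝ}
    (hd : Measurable[m] d) (hv : Measurable[m] v) (hdL : MemLp d 2 μ) (hvL : MemLp v 2 μ)
    (hd'L : MemLp d' 2 μ) (hyL : MemLp y 2 μ) (hy'L : MemLp y' 2 μ) (hwL : MemLp w 2 μ)
    (hfwd : d' =ᵐ[μ] fun ω => ev (A ω *ᵥ d ω) + ev (B ω *ᵥ v ω)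
      + w ω • (ev (C ω *ᵥ d ω) + ev (D ω *ᵥ v ω)))
    (hbwd : ∀ᵐ ω ∂μ, y ω = ev ((A ω)ᵀ *ᵥ μ[y' | m] ω)
      + ev ((C ω)ᵀ *ᵥ μ[fun ω => w ω • y' ω | m] ω) + ev (q ω)) :
    ∫ ω, d' ω ⬝ᵥ y' ω ∂μ = ∫ ω, d ω ⬝ᵥ y ω ∂μ
      + ∫ ω, ((ev ((B ω)ᵀ *ᵥ μ[y' | m] ω) + ev ((D ω)ᵀ *ᵥ μ[fun ω => w ω • y' ω | m] ω))
        ⬝ᵥ v ω - q ω ⬝ᵥ d ω) ∂μ := by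
  have hAe i j := ((hA i j).mono hm le_rfl).aestronglyMeasurable (μ := μ)
  have hBe i j := ((hB i j).mono hm le_rfl).aestronglyMeasurable (μ := μ)
  have hf := ((measurable_ev_mulVec hA hd).add (measurable_ev_mulVec hB hv)).stronglyMeasurable
  have hg := ((measurable_ev_mulVec hC hd).add (measurable_ev_mulVec hD hv)).stronglyMeasurable
  have hfL := (hdL.ev_mulVec hAe hAbd).add (hvL.ev_mulVec hBe hBbd)
  have hcond := condExp_dotProduct_of_ae_eq_add_smul hf hg hfwd (integrable_dotProduct hd'L hy'L)
    (integrable_dotProduct hfL hy'L) (hy'L.integrable one_le_two)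
    (memLp_one_iff_integrable.mp (hy'L.smul hwL))
  have hdual : (fun ω => (ev (A ω *ᵥ d ω) + ev (B ω *ᵥ v ω)) ⬝ᵥ μ[y' | m] ω
      + (ev (C ω *ᵥ d ω) + ev (D ω *ᵥ v ω)) ⬝ᵥ μ[fun ω => w ω • y' ω | m] ω) =ᵐ[μ]
      fun ω => d ω ⬝ᵥ y ω
        + ((ev ((B ω)ᵀ *ᵥ μ[y' | m] ω) + ev ((D ω)ᵀ *ᵥ μ[fun ω => w ω • y' ω | m] ω))
          ⬝ᵥ v ω - q ω ⬝ᵥ d ω) := by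
    filter_upwards [hbwd] with ω hω
    exact dotProduct_mulVec_add_eq_of_adjoint _ _ _ _ _ _ _ _ _ _ (congrArg WithLp.ofLp hω)
  have hdy := integrable_dotProduct hdL hyL
  have hR := ((integrable_condExp.congr (hcond.trans hdual)).sub hdy).congr
    (ae_of_all _ fun ω => add_sub_cancel_left _ _)
  calc ∫ ω, d' ω ⬝ᵥ y' ω ∂μ = ∫ ω, μ[fun ω => d' ω ⬝ᵥ y' ω | m] ω ∂μ :=
        (integral_condExp hm).symm
    _ = _ := integral_congr_ae (hcond.trans hdual)
    _ = _ := integral_add hdy hR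

theorem stmt16_general (n m N : ℕ)
    {Ω : Type} [m0 : MeasurableSpace Ω] (P : Measure Ω) [IsProbabilityMeasure P]
    (G : ℕ → MeasurableSpace Ω) (hGle : ∀ k, G k ≤ m0)
    (w : ℕ → Ω → ℝ)
    (hwmeas : ∀ k, Measurable[G (k + 1)] (w k))
    (hw1 : ∀ k, P[fun ω => w k ω ^ 2 | G k] =ᵐ[P] 1)
    (A Cm : ℕ → Ω → Matrix (Fin n) (Fin n) ℝ)
    (B D : ℕ → Ω → Matrix (Fin n) (Fin m) ℝ)
    (Q : ℕ → Ω → Matrix (Fin n) (Fin n) ℝ)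
    (M : Matrix (Fin n) (Fin n) ℝ) (Gm : Ω → Matrix (Fin n) (Fin n) ℝ)
    (bc σc : ℕ → Ω → Vec n)
    (hAmeas : ∀ k i j, Measurable[G k] (fun ω => A k ω i j))
    (hCmmeas : ∀ k i j, Measurable[G k] (fun ω => Cm k ω i j))
    (hBmeas : ∀ k i j, Measurable[G k] (fun ω => B k ω i j))
    (hDmeas : ∀ k i j, Measurable[G k] (fun ω => D k ω i j))
    (hAbd : ∃ c, ∀ k ω i j, |A k ω i j| ≤ c)
    (hBbd : ∃ c, ∀ k ω i j, |B k ω i j| ≤ c)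
    (hM : M.PosDef)
    -- the admissible pair (ξ, u, x)
    (u : ℕ → Ω → Vec m) (x : ℕ → Ω → Vec n)
    (hxad : ∀ k, k ≤ N → Measurable[G k] (x k) ∧ MemLp (x k) 2 P)
    (huad : ∀ k, k < N → Measurable[G k] (u k) ∧ MemLp (u k) 2 P)
    (hfwd : ∀ k, k < N → ∀ᵐ ω ∂P, x (k + 1) ω =
      ev ((A k ω).mulVec (x k ω)) + ev ((B k ω).mulVec (u k ω)) + bc k ω
      + w k ω • (ev ((Cm k ω).mulVec (x k ω)) + ev ((D k ω).mulVec (u k ω)) + σc k ω))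
    -- the Hamiltonian solution (ξ̄, ū, x̄, ȳ)
    (ub : ℕ → Ω → Vec m) (xb yb : ℕ → Ω → Vec n)
    (hxbad : ∀ k, k ≤ N → Measurable[G k] (xb k) ∧ MemLp (xb k) 2 P)
    (hubad : ∀ k, k < N → Measurable[G k] (ub k) ∧ MemLp (ub k) 2 P)
    (hybad : ∀ k, k ≤ N → Measurable[G k] (yb k) ∧ MemLp (yb k) 2 P)
    (hfwdb : ∀ k, k < N → ∀ᵐ ω ∂P, xb (k + 1) ω =
      ev ((A k ω).mulVec (xb k ω)) + ev ((B k ω).mulVec (ub k ω)) + bc k ω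
      + w k ω • (ev ((Cm k ω).mulVec (xb k ω)) + ev ((D k ω).mulVec (ub k ω)) + σc k ω))
    (hinit : ∀ᵐ ω ∂P, xb 0 ω = -ev (M⁻¹.mulVec (yb 0 ω)))
    (hbwd : ∀ k, k < N → ∀ᵐ ω ∂P, yb k ω =
      ev ((A k ω)ᵀ.mulVec ((P[yb (k + 1) | G k]) ω))
      + ev ((Cm k ω)ᵀ.mulVec ((P[fun ω' => w k ω' • yb (k + 1) ω' | G k]) ω))
      + ev ((Q k ω).mulVec (xb k ω)))
    (hterm : ∀ᵐ ω ∂P, yb N ω = ev ((Gm ω).mulVec (xb N ω))) :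
    ∫ ω, (M.mulVec (xb 0 ω) ⬝ᵥ (x 0 ω - xb 0 ω)
        + (Gm ω).mulVec (xb N ω) ⬝ᵥ (x N ω - xb N ω)) ∂P =
      ∑ k ∈ Finset.range N,
        ∫ ω, ((ev ((B k ω)ᵀ.mulVec ((P[yb (k + 1) | G k]) ω))
              + ev ((D k ω)ᵀ.mulVec ((P[fun ω' => w k ω' • yb (k + 1) ω' | G k]) ω)))
                ⬝ᵥ (u k ω - ub k ω)
            - (Q k ω).mulVec (xb k ω) ⬝ᵥ (x k ω - xb k ω)) ∂P := by
  have hw : ∀ k, MemLp (w k) 2 P := fun k => memLp_two_of_condExp_sq_eq_one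
    ((hwmeas k).mono (hGle _) le_rfl).aestronglyMeasurable (hw1 k)
  have hdy : ∀ k ≤ N, Integrable (fun ω => (x k ω - xb k ω : Vec n) ⬝ᵥ yb k ω) P :=
    fun k hk => integrable_dotProduct ((hxad k hk).2.sub (hxbad k hk).2) (hybad k hk).2
  have hdiff : ∀ k < N, (fun ω => x (k + 1) ω - xb (k + 1) ω) =ᵐ[P] fun ω =>
      ev (A k ω *ᵥ (x k ω - xb k ω)) + ev (B k ω *ᵥ (u k ω - ub k ω))
      + w k ω • (ev (Cm k ω *ᵥ (x k ω - xb k ω)) + ev (D k ω *ᵥ (u k ω - ub k ω))) := by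
    intro k hk
    filter_upwards [hfwd k hk, hfwdb k hk] with ω h h'
    rw [h, h']
    exact forward_step_sub _ _ _ _ _ _ _ _ _ _ _
  have step k (hk : k < N) :=
    integral_dotProduct_adjoint_step (hGle k) (hAmeas k) (hBmeas k) (hCmmeas k) (hDmeas k)
      (hAbd.imp fun _ hc => hc k) (hBbd.imp fun _ hc => hc k)
      ((hxad k hk.le).1.sub (hxbad k hk.le).1) ((huad k hk).1.sub (hubad k hk).1)
      ((hxad k hk.le).2.sub (hxbad k hk.le).2) ((huad k hk).2.sub (hubad k hk).2)
      ((hxad (k + 1) hk).2.sub (hxbad (k + 1) hk).2) (hybad k hk.le).2 (hybad (k + 1) hk).2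
      (hw k) (hdiff k hk) (hbwd k hk)
  calc _ = ∫ ω, ((x N ω - xb N ω : Vec n) ⬝ᵥ yb N ω - (x 0 ω - xb 0 ω : Vec n) ⬝ᵥ yb 0 ω) ∂P :=
        integral_congr_ae (by
          filter_upwards [hinit, hterm] with ω h₀ h
          exact dotProduct_boundary hM.isUnit _ h₀ h)
    _ = _ := integral_sub (hdy N le_rfl) (hdy 0 N.zero_le)
    _ = _ := (Finset.sum_range_sub (fun k => ∫ ω, (x k ω - xb k ω : Vec n) ⬝ᵥ yb k ω ∂P) N).symm
    _ = _ := Finset.sum_congr rfl fun k hk => sub_eq_of_eq_add' (step k (Finset.mem_range.mp hk))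

/-- key duality computation in the forward LQ verification.  With
`(x̄, ȳ, ū)` solving the Hamiltonian system and `(x, u)` any admissible state-control
pair with the same forward dynamics,
`E[⟨Mξ̄, ξ−ξ̄⟩ + ⟨Gx̄_N, x_N−x̄_N⟩]
  = Σ_{k<N} E[⟨Bᵀ_k ȳ'_{k+1} + Dᵀ_k z̄'_{k+1}, u_k−ū_k⟩ − ⟨Q_k x̄_k, x_k−x̄_k⟩]`.
`G k` plays the role of `F_{k-1}`. -/
theorem stmt16 (n m N : ℕ)
    {Ω : Type} [m0 : MeasurableSpace Ω] (P : Measure Ω) [IsProbabilityMeasure P]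
    (G : ℕ → MeasurableSpace Ω) (hGmono : Monotone G) (hGle : ∀ k, G k ≤ m0)
    (w : ℕ → Ω → ℝ)
    (hwmeas : ∀ k, Measurable[G (k + 1)] (w k))
    (hw0 : ∀ k, P[w k | G k] =ᵐ[P] 0)
    (hw1 : ∀ k, P[fun ω => w k ω ^ 2 | G k] =ᵐ[P] 1)
    (A Cm : ℕ → Ω → Matrix (Fin n) (Fin n) ℝ)
    (B D : ℕ → Ω → Matrix (Fin n) (Fin m) ℝ)
    (Q : ℕ → Ω → Matrix (Fin n) (Fin n) ℝ)
    (M : Matrix (Fin n) (Fin n) ℝ) (Gm : Ω → Matrix (Fin n) (Fin n) ℝ)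
    (bc σc : ℕ → Ω → Vec n)
    (hAmeas : ∀ k i j, Measurable[G k] (fun ω => A k ω i j))
    (hCmmeas : ∀ k i j, Measurable[G k] (fun ω => Cm k ω i j))
    (hBmeas : ∀ k i j, Measurable[G k] (fun ω => B k ω i j))
    (hDmeas : ∀ k i j, Measurable[G k] (fun ω => D k ω i j))
    (hQmeas : ∀ k i j, Measurable[G k] (fun ω => Q k ω i j))
    (hGmmeas : ∀ i j, Measurable[G N] (fun ω => Gm ω i j))
    (hAbd : ∃ c, ∀ k ω i j, |A k ω i j| ≤ c) (hCmbd : ∃ c, ∀ k ω i j, |Cm k ω i j| ≤ c)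
    (hBbd : ∃ c, ∀ k ω i j, |B k ω i j| ≤ c) (hDbd : ∃ c, ∀ k ω i j, |D k ω i j| ≤ c)
    (hQbd : ∃ c, ∀ k ω i j, |Q k ω i j| ≤ c) (hGmbd : ∃ c, ∀ ω i j, |Gm ω i j| ≤ c)
    (hbL2 : ∀ k, Measurable[G k] (bc k) ∧ MemLp (bc k) 2 P)
    (hσL2 : ∀ k, Measurable[G k] (σc k) ∧ MemLp (σc k) 2 P)
    (hM : M.PosDef)
    -- the admissible pair (ξ, u, x)
    (ξ : Vec n) (u : ℕ → Ω → Vec m) (x : ℕ → Ω → Vec n)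
    (hxad : ∀ k, k ≤ N → Measurable[G k] (x k) ∧ MemLp (x k) 2 P)
    (huad : ∀ k, k < N → Measurable[G k] (u k) ∧ MemLp (u k) 2 P)
    (hx0 : x 0 = fun _ => ξ)
    (hfwd : ∀ k, k < N → ∀ᵐ ω ∂P, x (k + 1) ω =
      ev ((A k ω).mulVec (x k ω)) + ev ((B k ω).mulVec (u k ω)) + bc k ω
      + w k ω • (ev ((Cm k ω).mulVec (x k ω)) + ev ((D k ω).mulVec (u k ω)) + σc k ω))
    -- the Hamiltonian solution (ξ̄, ū, x̄, ȳ)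
    (ξb : Vec n) (ub : ℕ → Ω → Vec m) (xb yb : ℕ → Ω → Vec n)
    (hxbad : ∀ k, k ≤ N → Measurable[G k] (xb k) ∧ MemLp (xb k) 2 P)
    (hubad : ∀ k, k < N → Measurable[G k] (ub k) ∧ MemLp (ub k) 2 P)
    (hybad : ∀ k, k ≤ N → Measurable[G k] (yb k) ∧ MemLp (yb k) 2 P)
    (hxb0 : xb 0 = fun _ => ξb)
    (hfwdb : ∀ k, k < N → ∀ᵐ ω ∂P, xb (k + 1) ω =
      ev ((A k ω).mulVec (xb k ω)) + ev ((B k ω).mulVec (ub k ω)) + bc k ω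
      + w k ω • (ev ((Cm k ω).mulVec (xb k ω)) + ev ((D k ω).mulVec (ub k ω)) + σc k ω))
    (hinit : ∀ᵐ ω ∂P, xb 0 ω = -ev (M⁻¹.mulVec (yb 0 ω)))
    (hbwd : ∀ k, k < N → ∀ᵐ ω ∂P, yb k ω =
      ev ((A k ω)ᵀ.mulVec ((P[yb (k + 1) | G k]) ω))
      + ev ((Cm k ω)ᵀ.mulVec ((P[fun ω' => w k ω' • yb (k + 1) ω' | G k]) ω))
      + ev ((Q k ω).mulVec (xb k ω)))
    (hterm : ∀ᵐ ω ∂P, yb N ω = ev ((Gm ω).mulVec (xb N ω))) :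
    ∫ ω, (M.mulVec (xb 0 ω) ⬝ᵥ (x 0 ω - xb 0 ω)
        + (Gm ω).mulVec (xb N ω) ⬝ᵥ (x N ω - xb N ω)) ∂P =
      ∑ k ∈ Finset.range N,
        ∫ ω, ((ev ((B k ω)ᵀ.mulVec ((P[yb (k + 1) | G k]) ω))
              + ev ((D k ω)ᵀ.mulVec ((P[fun ω' => w k ω' • yb (k + 1) ω' | G k]) ω)))
                ⬝ᵥ (u k ω - ub k ω)
            - (Q k ω).mulVec (xb k ω) ⬝ᵥ (x k ω - xb k ω)) ∂P :=
  stmt16_general n m N (m0 := m0) P G hGle w hwmeas hw1 A Cm B D Q M Gm bc σc hAmeas hCmmeas hBmeas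
    hDmeas hAbd hBbd hM u x hxad huad hfwd ub xb yb hxbad hubad hybad hfwdb hinit hbwd hterm
end
end
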